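/- arXiv:0807.1788 — 6 statements merged into one kernel-verified Lean document; each statement's English description precedes it below -/
import Mathlib

section
/- For nonnegative reals x_1,...,x_n and positive weights α_i summing to 1, ∏_{i=1}^n x_i^{α_i} ≤ ∑_{i=1}^n α_i x_i − ∑_{i=1}^n α_i (x_i^{1/2} − ∑_{k=1}^n α_k x_k^{1/2})^2. That is, the gap between the weighted arithmetic and geometric means is at least the variance of the vector (x_1^{1/2},...,x_n^{1/2}) with respect to the probability measure ∑ α_i δ_i. -/
open Finset

theorem refined_amgm (n : ℕ) (hn : 1 ≤ n) (x α : Fin n → ℝ)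
    (hx : ∀ i, 0 ≤ x i) (hα : ∀ i, 0 < α i) (hαs : ∑ i, α i = 1) :
    ∏ i, x i ^ α i ≤
      ∑ i, α i * x i -
        ∑ i, α i * (x i ^ ((1 : ℝ) / 2) - ∑ k, α k * x k ^ ((1 : ℝ) / 2)) ^ 2 := by
  set m : ℝ := ∑ k, α k * x k ^ ((1 : ℝ) / 2) with hm
  have key : ∑ i, α i * x i - ∑ i, α i * (x i ^ ((1 : ℝ) / 2) - m) ^ 2 = m ^ 2 := by
    have hsq : ∀ i : Fin n, (x i ^ ((1 : ℝ) / 2)) ^ 2 = x i := by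
      intro i
      rw [← Real.rpow_natCast (x i ^ ((1:ℝ)/2)) 2, ← Real.rpow_mul (hx i)]
      norm_num
    have : ∀ i : Fin n, α i * (x i ^ ((1 : ℝ) / 2) - m) ^ 2
        = α i * x i - 2 * m * (α i * x i ^ ((1:ℝ)/2)) + α i * m ^ 2 := by
      intro i
      have hx' : α i * x i = α i * (x i ^ ((1:ℝ)/2)) ^ 2 := by rw [hsq i]
      rw [sub_sq, hx']; ring
    rw [Finset.sum_congr rfl (fun i _ => this i)]
    rw [Finset.sum_add_distrib, Finset.sum_sub_distrib, ← Finset.mul_sum,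
      ← Finset.sum_mul, hαs, ← hm]
    ring
  rw [key]
  have hgm : ∏ i, (x i ^ ((1:ℝ)/2)) ^ α i ≤ m :=
    Real.geom_mean_le_arith_mean_weighted univ α (fun i => x i ^ ((1:ℝ)/2))
      (fun i _ => (hα i).le) hαs (fun i _ => Real.rpow_nonneg (hx i) _)
  have hm0 : 0 ≤ m := Finset.sum_nonneg fun i _ =>
    mul_nonneg (hα i).le (Real.rpow_nonneg (hx i) _)
  have hprodeq : ∏ i, x i ^ α i = (∏ i, (x i ^ ((1:ℝ)/2)) ^ α i) ^ 2 := by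
    rw [← Finset.prod_pow]
    refine Finset.prod_congr rfl fun i _ => ?_
    rw [sq, ← Real.rpow_add' (Real.rpow_nonneg (hx i) _)
        (by have := hα i; intro h; nlinarith), ← Real.rpow_mul (hx i)]
    congr 1; ring
  rw [hprodeq]
  have h0 : 0 ≤ ∏ i, (x i ^ ((1:ℝ)/2)) ^ α i :=
    Finset.prod_nonneg fun i _ => Real.rpow_nonneg (Real.rpow_nonneg (hx i) _) _
  exact pow_le_pow_left₀ h0 hgm 2
end

section
/- For nonnegative reals x_1,...,x_n with m = min x_i > 0 and M = max x_i, and positive weights α_i summing to 1, the gap ∑ α_i x_i − ∏ x_i^{α_i} is at most (1/(2m)) ∑ α_i (x_i − ∑_k α_k x_k)^2. -/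
/-!
With `A = ∑ αᵢ xᵢ` and `G = ∏ xᵢ ^ αᵢ`, the bound `log y ≤ y - 1` at `y = G / A` gives
`A - G ≤ A log (A / G)`. Since `∑ αᵢ (xᵢ - A) = 0`, this equals `∑ αᵢ (xᵢ - A - A log (xᵢ / A))`,
and each summand is at most `(xᵢ - A)² / (2 min xᵢ A) ≤ (xᵢ - A)² / (2 m)`: for `xᵢ ≤ A` this is
`log u ≤ sinh (log u)` at `u = A / xᵢ`, for `xᵢ ≥ A` it is `log s ≥ (s - 1) - (s - 1)² / 2`.
-/

open Finset Real

namespace Real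

lemma log_le_half_sub_inv {u : ℝ} (hu : 1 ≤ u) : log u ≤ (u - u⁻¹) / 2 :=
  (self_le_sinh_iff.2 (log_nonneg hu)).trans_eq (sinh_log (by positivity))

lemma sub_one_sub_sq_div_two_le_log {s : ℝ} (hs : 1 ≤ s) : s - 1 - (s - 1) ^ 2 / 2 ≤ log s := by
  let g : ℝ → ℝ := fun u ↦ log u - (u - 1) + (u - 1) ^ 2 / 2
  have hg : ∀ u ∈ Set.Ioi (0 : ℝ), HasDerivAt g ((u - 1) ^ 2 / u) u := by
    intro u (hu : 0 < u)
    refine (((hasDerivAt_log hu.ne').fun_sub ((hasDerivAt_id' u).sub_const 1)).fun_add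
      ((((hasDerivAt_id' u).sub_const 1).fun_pow 2).div_const 2)).congr_deriv ?_
    field_simp
    ring
  have hmono : MonotoneOn g (Set.Ioi 0) :=
    monotoneOn_of_hasDerivWithinAt_nonneg (convex_Ioi 0)
      (fun u hu ↦ (hg u hu).continuousAt.continuousWithinAt)
      (fun u hu ↦ (hg u (interior_subset hu)).hasDerivWithinAt)
      (fun u hu ↦ by have : (0 : ℝ) < u := interior_subset hu; positivity)
  have := hmono (Set.mem_Ioi.2 one_pos) (Set.mem_Ioi.2 (one_pos.trans_le hs)) hs
  simp only [g, log_one] at this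
  linarith

lemma sub_sub_mul_log_div_le {a t : ℝ} (ha : 0 < a) (ht : 0 < t) :
    t - a - a * log (t / a) ≤ (t - a) ^ 2 / (2 * min t a) := by
  rcases le_total t a with hta | hat
  · have hlog := log_le_half_sub_inv ((one_le_div ht).2 hta)
    calc t - a - a * log (t / a) = t - a + a * log (a / t) := by
          rw [← inv_div, log_inv]; ring
      _ ≤ t - a + a * ((a / t - (a / t)⁻¹) / 2) := by gcongr
      _ = (t - a) ^ 2 / (2 * min t a) := by rw [min_eq_left hta]; field_simp; ring
  · have hlog := sub_one_sub_sq_div_two_le_log ((one_le_div ha).2 hat)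
    calc t - a - a * log (t / a) ≤ t - a - a * (t / a - 1 - (t / a - 1) ^ 2 / 2) := by gcongr
      _ = (t - a) ^ 2 / (2 * min t a) := by rw [min_eq_right hat]; field_simp; ring

variable {ι : Type*} {s : Finset ι} {w x : ι → ℝ}

lemma arith_mean_sub_geom_mean_weighted_le_sum_log (hw : ∀ i ∈ s, 0 ≤ w i)
    (hw₁ : ∑ i ∈ s, w i = 1) (hx : ∀ i ∈ s, 0 < x i) {a : ℝ} (ha : ∑ i ∈ s, w i * x i = a) :
    a - ∏ i ∈ s, x i ^ w i ≤ ∑ i ∈ s, w i * (x i - a - a * log (x i / a)) := by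
  obtain ⟨j, hj, hwj⟩ := exists_ne_zero_of_sum_ne_zero (hw₁.trans_ne one_ne_zero)
  have ha₀ : 0 < a := ha ▸ sum_pos' (fun i hi ↦ mul_nonneg (hw i hi) (hx i hi).le)
    ⟨j, hj, mul_pos ((hw j hj).lt_of_ne' hwj) (hx j hj)⟩
  have hG₀ : 0 < ∏ i ∈ s, x i ^ w i := prod_pos fun i hi ↦ rpow_pos_of_pos (hx i hi) _
  have hlogG : log (∏ i ∈ s, x i ^ w i) = ∑ i ∈ s, w i * log (x i) := by
    rw [log_prod fun i hi ↦ (rpow_pos_of_pos (hx i hi) _).ne']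
    exact sum_congr rfl fun i hi ↦ log_rpow (hx i hi) _
  have hsum : ∑ i ∈ s, w i * (x i - a - a * log (x i / a)) =
      ∑ i ∈ s, w i * x i - a * ∑ i ∈ s, w i - a * ∑ i ∈ s, w i * log (x i)
        + a * log a * ∑ i ∈ s, w i := by
    rw [mul_sum, mul_sum, mul_sum, ← sum_sub_distrib, ← sum_sub_distrib, ← sum_add_distrib]
    refine sum_congr rfl fun i hi ↦ ?_
    rw [log_div (hx i hi).ne' ha₀.ne']
    ring
  calc a - ∏ i ∈ s, x i ^ w i
      = a * (1 - (a / ∏ i ∈ s, x i ^ w i)⁻¹) := by field_simp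
    _ ≤ a * log (a / ∏ i ∈ s, x i ^ w i) := by
      gcongr
      exact one_sub_inv_le_log_of_pos (by positivity)
    _ = ∑ i ∈ s, w i * (x i - a - a * log (x i / a)) := by
      rw [hsum, log_div ha₀.ne' hG₀.ne', hlogG, ha, hw₁]
      ring

lemma arith_mean_sub_geom_mean_weighted_le_sum_sq_div (hw : ∀ i ∈ s, 0 ≤ w i)
    (hw₁ : ∑ i ∈ s, w i = 1) {m : ℝ} (hm : 0 < m) (hmx : ∀ i ∈ s, m ≤ x i) :
    ∑ i ∈ s, w i * x i - ∏ i ∈ s, x i ^ w i ≤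
      1 / (2 * m) * ∑ i ∈ s, w i * (x i - ∑ k ∈ s, w k * x k) ^ 2 := by
  set a := ∑ i ∈ s, w i * x i
  have hx : ∀ i ∈ s, 0 < x i := fun i hi ↦ hm.trans_le (hmx i hi)
  have hma : m ≤ a := calc
    m = ∑ i ∈ s, w i * m := by rw [← sum_mul, hw₁, one_mul]
    _ ≤ a := sum_le_sum fun i hi ↦ mul_le_mul_of_nonneg_left (hmx i hi) (hw i hi)
  calc a - ∏ i ∈ s, x i ^ w i ≤ ∑ i ∈ s, w i * (x i - a - a * log (x i / a)) :=
        arith_mean_sub_geom_mean_weighted_le_sum_log hw hw₁ hx rfl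
    _ ≤ ∑ i ∈ s, w i * ((x i - a) ^ 2 / (2 * m)) := by
      refine sum_le_sum fun i hi ↦ mul_le_mul_of_nonneg_left ?_ (hw i hi)
      calc x i - a - a * log (x i / a) ≤ (x i - a) ^ 2 / (2 * min (x i) a) :=
            sub_sub_mul_log_div_le (hm.trans_le hma) (hx i hi)
        _ ≤ (x i - a) ^ 2 / (2 * m) := by gcongr; exact le_min (hmx i hi) hma
    _ = 1 / (2 * m) * ∑ i ∈ s, w i * (x i - a) ^ 2 := by
      rw [mul_sum]
      exact sum_congr rfl fun i _ ↦ by ring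

end Real

theorem cartwright_field_upper (n : ℕ) (x α : Fin (n + 1) → ℝ)
    (hx : ∀ i, 0 < x i) (hα : ∀ i, 0 < α i) (hαs : ∑ i, α i = 1) :
    ∑ i, α i * x i - ∏ i, x i ^ α i ≤
      (1 / (2 * Finset.univ.inf' Finset.univ_nonempty x)) *
        ∑ i, α i * (x i - ∑ k, α k * x k) ^ 2 :=
  arith_mean_sub_geom_mean_weighted_le_sum_sq_div (fun i _ ↦ (hα i).le) hαs
    ((lt_inf'_iff _).2 fun i _ ↦ hx i) fun _ hi ↦ inf'_le x hi
end

section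
/- For positive reals x_1,...,x_n with M = max x_i, and positive weights α_i summing to 1, the gap ∑ α_i x_i − ∏ x_i^{α_i} is at least (1/(2M)) ∑ α_i (x_i − ∑_k α_k x_k)^2. -/
/-!
With `A = ∑ αₖ xₖ`, replacing each `xᵢ` by `zᵢ = xᵢ exp (-(xᵢ - A) / M)` does not change the
weighted geometric mean, since the exponents have weighted mean zero. Weighted AM-GM for the `zᵢ`,
together with the second-order bound `x e^{-u} ≤ x - x u + M u² / 2` (valid as `x ≤ M` and
`A ≤ M`), then yields the estimate after summation.
-/
open Finset Real

lemma exp_neg_le_one_sub_add_sq_div_two {u : ℝ} (hu : 0 ≤ u) :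
    exp (-u) ≤ 1 - u + u ^ 2 / 2 := by
  have hcubic : 1 + u + u ^ 2 / 2 + u ^ 3 / 6 ≤ exp u := by
    simpa [sum_range_succ, Nat.factorial] using sum_le_exp_of_nonneg hu 4
  rw [exp_neg, inv_le_iff_one_le_mul₀' (exp_pos u)]
  calc (1 : ℝ) ≤ (1 + u + u ^ 2 / 2 + u ^ 3 / 6) * (1 - u + u ^ 2 / 2) := by
        nlinarith [pow_nonneg hu 3, pow_nonneg hu 4, pow_nonneg hu 5]
    _ ≤ exp u * (1 - u + u ^ 2 / 2) := by gcongr; nlinarith [sq_nonneg (u - 1)]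

lemma one_sub_mul_exp_le {v : ℝ} (h0 : 0 ≤ v) (h1 : v ≤ 1) :
    (1 - v) * exp v ≤ 1 - v ^ 2 / 2 := by
  have hcubic : exp v ≤ 1 + v + v ^ 2 / 2 + 2 / 9 * v ^ 3 := by
    have := exp_bound' h0 h1 (n := 3) (by norm_num)
    norm_num [sum_range_succ, Nat.factorial] at this
    linarith
  calc (1 - v) * exp v ≤ (1 - v) * (1 + v + v ^ 2 / 2 + 2 / 9 * v ^ 3) := by gcongr
    _ ≤ 1 - v ^ 2 / 2 := by nlinarith [pow_nonneg h0 3, pow_nonneg h0 4]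

lemma mul_exp_neg_le {x M u : ℝ} (hM : 0 < M) (hx : 0 ≤ x) (hxM : x ≤ M) (hu : x ≤ M * (1 + u)) :
    x * exp (-u) ≤ x - x * u + M * u ^ 2 / 2 := by
  rcases le_or_gt 0 u with hu0 | hu0
  · calc x * exp (-u) ≤ x * (1 - u + u ^ 2 / 2) := by
          gcongr; exact exp_neg_le_one_sub_add_sq_div_two hu0
      _ ≤ x - x * u + M * u ^ 2 / 2 := by nlinarith [sq_nonneg u]
  · -- with `v = -u`, the bound reads `x (e^v - 1 - v) ≤ M v² / 2`, and `x ≤ M (1 - v)`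
    have hv1 : -u ≤ 1 := by nlinarith
    have hexp : 0 ≤ exp (-u) - 1 - -u := by linarith [add_one_le_exp (-u)]
    have := one_sub_mul_exp_le (neg_nonneg.2 hu0.le) hv1
    nlinarith [mul_le_mul_of_nonneg_right hu hexp]

lemma prod_mul_exp_rpow {ι : Type*} (s : Finset ι) (w x c : ι → ℝ) (hx : ∀ i ∈ s, 0 ≤ x i) :
    ∏ i ∈ s, (x i * exp (c i)) ^ w i = (∏ i ∈ s, x i ^ w i) * exp (∑ i ∈ s, w i * c i) := by
  rw [exp_sum, ← prod_mul_distrib]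
  refine prod_congr rfl fun i hi => ?_
  rw [mul_rpow (hx i hi) (exp_pos _).le, ← exp_mul, mul_comm (c i)]

theorem geom_mean_le_arith_mean_sub_variance_weighted {ι : Type*} (s : Finset ι) (w x : ι → ℝ)
    (hw : ∀ i ∈ s, 0 ≤ w i) (hw' : ∑ i ∈ s, w i = 1) (hx : ∀ i ∈ s, 0 ≤ x i) {M : ℝ}
    (hM : 0 < M) (hxM : ∀ i ∈ s, x i ≤ M) :
    ∏ i ∈ s, x i ^ w i ≤
      ∑ i ∈ s, w i * x i - 1 / (2 * M) * ∑ i ∈ s, w i * (x i - ∑ k ∈ s, w k * x k) ^ 2 := by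
  set A := ∑ k ∈ s, w k * x k
  have hAM : A ≤ M := by
    calc A ≤ ∑ k ∈ s, w k * M := sum_le_sum fun i hi => mul_le_mul_of_nonneg_left (hxM i hi) (hw i hi)
      _ = M := by rw [← sum_mul, hw', one_mul]
  have hcentered : ∑ i ∈ s, w i * (x i - A) = 0 := by
    simp only [mul_sub, sum_sub_distrib, ← sum_mul, hw', one_mul, sub_self, A]
  -- the factors `exp (-((x i - A) / M))` have weighted geometric mean one
  set z := fun i => x i * exp (-((x i - A) / M))
  have hgeom : ∏ i ∈ s, x i ^ w i = ∏ i ∈ s, z i ^ w i := by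
    have hexponent : ∑ i ∈ s, w i * -((x i - A) / M) = 0 := by
      simp only [mul_neg, sum_neg_distrib, mul_div_assoc', ← sum_div, hcentered, zero_div, neg_zero]
    rw [prod_mul_exp_rpow s w x _ hx, hexponent, exp_zero, mul_one]
  have hz : ∀ i ∈ s, z i ≤ x i - A / M * (x i - A) - (x i - A) ^ 2 / (2 * M) := by
    intro i hi
    convert mul_exp_neg_le hM (hx i hi) (hxM i hi) (u := (x i - A) / M) ?_ using 1
    · field_simp; ring
    · field_simp; linarith
  calc ∏ i ∈ s, x i ^ w i = ∏ i ∈ s, z i ^ w i := hgeom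
    _ ≤ ∑ i ∈ s, w i * z i := geom_mean_le_arith_mean_weighted s w z hw hw' fun i hi =>
        mul_nonneg (hx i hi) (exp_pos _).le
    _ ≤ ∑ i ∈ s, w i * (x i - A / M * (x i - A) - (x i - A) ^ 2 / (2 * M)) :=
        sum_le_sum fun i hi => mul_le_mul_of_nonneg_left (hz i hi) (hw i hi)
    _ = ∑ i ∈ s, (w i * x i - A / M * (w i * (x i - A)) - 1 / (2 * M) * (w i * (x i - A) ^ 2)) :=
        sum_congr rfl fun i _ => by ring
    _ = A - A / M * ∑ i ∈ s, w i * (x i - A) - 1 / (2 * M) * ∑ i ∈ s, w i * (x i - A) ^ 2 := by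
        rw [sum_sub_distrib, sum_sub_distrib, ← mul_sum, ← mul_sum]
    _ = _ := by rw [hcentered, mul_zero, sub_zero]

theorem cartwright_field_lower (n : ℕ) (x α : Fin (n + 1) → ℝ)
    (hx : ∀ i, 0 < x i) (hα : ∀ i, 0 < α i) (hαs : ∑ i, α i = 1) :
    (1 / (2 * Finset.univ.sup' Finset.univ_nonempty x)) *
        ∑ i, α i * (x i - ∑ k, α k * x k) ^ 2 ≤
      ∑ i, α i * x i - ∏ i, x i ^ α i := by
  have hxM : ∀ i ∈ univ, x i ≤ univ.sup' univ_nonempty x := fun i hi => le_sup' x hi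
  have h := geom_mean_le_arith_mean_sub_variance_weighted univ α x (fun i _ => (hα i).le) hαs
    (fun i _ => (hx i).le) ((hx 0).trans_le (hxM 0 (mem_univ 0))) hxM
  linarith
end

section
/- There is no universal constant C > 0 such that for all n, all nonnegative x_1,...,x_n, and equal weights α_i = 1/n, one has (1/n)∑ x_i − ∏ x_i^{1/n} ≤ C · ∑ (1/n)(x_i^{1/2} − (1/n)∑_k x_k^{1/2})^2. Specifically, taking x_1 = 0 and x_2 = ... = x_n = 1, the ratio of the AM-GM gap to the variance of x^{1/2} tends to infinity as n → ∞. -/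
/-!
For `x = (0, 1, …, 1) ∈ ℝ^(m+1)` the geometric mean vanishes and `√x = x`, so the AM-GM gap is
the mean `m/(m+1)` while the variance of `√x` is `m/(m+1)²`: the gap is `m + 1` times the
variance, and no constant `C` can exceed every `m + 1`.
-/

open Finset

noncomputable section

def amGmGap {n : ℕ} (x : Fin n → ℝ) : ℝ :=
  (1 / n) * ∑ i, x i - ∏ i, x i ^ ((1 : ℝ) / n)

def sqrtVariance {n : ℕ} (x : Fin n → ℝ) : ℝ :=
  ∑ i, (1 / n) * (x i ^ ((1 : ℝ) / 2) - (1 / n) * ∑ k, x k ^ ((1 : ℝ) / 2)) ^ 2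

def zeroThenOnes (m : ℕ) : Fin (m + 1) → ℝ :=
  Fin.cons 0 1

end

namespace zeroThenOnes

variable (m : ℕ)

lemma nonneg (i : Fin (m + 1)) : 0 ≤ zeroThenOnes m i := by
  cases i using Fin.cases <;> simp [zeroThenOnes]

lemma rpow_eq_self {p : ℝ} (hp : p ≠ 0) (i : Fin (m + 1)) :
    zeroThenOnes m i ^ p = zeroThenOnes m i := by
  cases i using Fin.cases <;> simp [zeroThenOnes, Real.zero_rpow hp]

lemma sum_eq : ∑ i, zeroThenOnes m i = m := by
  simp [zeroThenOnes, Fin.sum_cons]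

lemma prod_rpow_eq_zero {p : ℝ} (hp : p ≠ 0) : ∏ i, zeroThenOnes m i ^ p = 0 := by
  rw [Fin.prod_univ_succ]
  simp [zeroThenOnes, Real.zero_rpow hp]

lemma amGmGap_eq : amGmGap (zeroThenOnes m) = m / (m + 1) := by
  have hp : (1 : ℝ) / ↑(m + 1) ≠ 0 := by positivity
  simp only [amGmGap, sum_eq, prod_rpow_eq_zero m hp]
  push_cast
  ring

lemma sqrtVariance_eq : sqrtVariance (zeroThenOnes m) = m / (m + 1) ^ 2 := by
  have hp : (1 : ℝ) / 2 ≠ 0 := by norm_num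
  simp only [sqrtVariance, rpow_eq_self m hp, sum_eq]
  simp only [Fin.sum_univ_succ, zeroThenOnes, Fin.cons_zero, Fin.cons_succ, Pi.one_apply,
    sum_const, card_univ, Fintype.card_fin, nsmul_eq_mul]
  push_cast
  field_simp
  ring

lemma sqrtVariance_pos (hm : 0 < m) : 0 < sqrtVariance (zeroThenOnes m) := by
  rw [sqrtVariance_eq]
  positivity

lemma amGmGap_eq_mul_sqrtVariance :
    amGmGap (zeroThenOnes m) = (m + 1) * sqrtVariance (zeroThenOnes m) := by
  rw [amGmGap_eq, sqrtVariance_eq]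
  field_simp

end zeroThenOnes

theorem no_universal_constant :
    ¬ ∃ C : ℝ, 0 < C ∧ ∀ (n : ℕ), 0 < n → ∀ x : Fin n → ℝ, (∀ i, 0 ≤ x i) →
      (1 / n) * ∑ i, x i - ∏ i, x i ^ ((1 : ℝ) / n) ≤
        C * ∑ i, (1 / n) * (x i ^ ((1 : ℝ) / 2) - (1 / n) * ∑ k, x k ^ ((1 : ℝ) / 2)) ^ 2 := by
  rintro ⟨C, -, h⟩
  set m := ⌈C⌉₊ + 1
  have hgap : amGmGap (zeroThenOnes m) ≤ C * sqrtVariance (zeroThenOnes m) :=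
    h (m + 1) m.succ_pos _ (zeroThenOnes.nonneg m)
  rw [zeroThenOnes.amGmGap_eq_mul_sqrtVariance] at hgap
  have hle : (m + 1 : ℝ) ≤ C :=
    le_of_mul_le_mul_right hgap (zeroThenOnes.sqrtVariance_pos m ⌈C⌉₊.succ_pos)
  have hC : C ≤ ⌈C⌉₊ := Nat.le_ceil C
  push_cast [m] at hle
  linarith
end

section
/- For nonnegative reals x, y and t ∈ (0,1): x^t y^{1−t} ≤ t x + (1−t) y − t(1−t)(√x − √y)^2. -/
theorem refined_amgm_two (x y t : ℝ) (hx : 0 ≤ x) (hy : 0 ≤ y)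
    (ht0 : 0 < t) (ht1 : t < 1) :
    x ^ t * y ^ (1 - t) ≤ t * x + (1 - t) * y - t * (1 - t) * (Real.sqrt x - Real.sqrt y) ^ 2 := by
  set a := Real.sqrt x with ha
  set b := Real.sqrt y with hb
  have ha0 : 0 ≤ a := Real.sqrt_nonneg x
  have hb0 : 0 ≤ b := Real.sqrt_nonneg y
  have ha2 : a ^ 2 = x := Real.sq_sqrt hx
  have hb2 : b ^ 2 = y := Real.sq_sqrt hy
  have h := Real.geom_mean_le_arith_mean2_weighted ht0.le (by linarith : (0:ℝ) ≤ 1 - t)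
    ha0 hb0 (by ring)
  have hL : x ^ t * y ^ (1 - t) = (a ^ t * b ^ (1 - t)) ^ 2 := by
    rw [← ha2, ← hb2, mul_pow, ← Real.rpow_natCast (a ^ t) 2, ← Real.rpow_natCast (b ^ (1-t)) 2,
      ← Real.rpow_natCast a 2, ← Real.rpow_natCast b 2,
      ← Real.rpow_mul ha0, ← Real.rpow_mul hb0, ← Real.rpow_mul ha0, ← Real.rpow_mul hb0,
      mul_comm t, mul_comm (1-t)]
  rw [hL]
  have hg0 : 0 ≤ a ^ t * b ^ (1 - t) :=
    mul_nonneg (Real.rpow_nonneg ha0 _) (Real.rpow_nonneg hb0 _)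
  nlinarith [sq_nonneg (t * a + (1 - t) * b), mul_le_mul h h hg0 (by nlinarith)]
end

section
/- For a, b ≥ 0 and conjugate exponents p, q > 1 (1/p + 1/q = 1): a b ≤ a^p/p + b^q/q − (1/(pq)) (a^{p/2} − b^{q/2})^2 (refined Young inequality). -/
theorem refined_young (a b p q : ℝ) (ha : 0 ≤ a) (hb : 0 ≤ b)
    (hp : 1 < p) (hq : 1 < q) (hpq : 1 / p + 1 / q = 1) :
    a * b ≤ a ^ p / p + b ^ q / q - (1 / (p * q)) * (a ^ (p / 2) - b ^ (q / 2)) ^ 2 := by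
  have hp0 : 0 < p := lt_trans one_pos hp
  have hq0 : 0 < q := lt_trans one_pos hq
  set u := a ^ (p / 2) with hu
  set v := b ^ (q / 2) with hv
  have hu0 : 0 ≤ u := Real.rpow_nonneg ha _
  have hv0 : 0 ≤ v := Real.rpow_nonneg hb _
  have h1 : u ^ (1 / p) = a ^ (1 / 2 : ℝ) := by
    rw [hu, ← Real.rpow_mul ha]
    congr 1
    field_simp
  have h2 : v ^ (1 / q) = b ^ (1 / 2 : ℝ) := by
    rw [hv, ← Real.rpow_mul hb]
    congr 1
    field_simp
  have hAM : u ^ (1 / p) * v ^ (1 / q) ≤ (1 / p) * u + (1 / q) * v :=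
    Real.geom_mean_le_arith_mean2_weighted (by positivity) (by positivity) hu0 hv0 hpq
  have hab : a * b = (u ^ (1 / p) * v ^ (1 / q)) ^ 2 := by
    rw [h1, h2, mul_pow, ← Real.rpow_natCast (a ^ (1/2 : ℝ)) 2,
      ← Real.rpow_natCast (b ^ (1/2 : ℝ)) 2, ← Real.rpow_mul ha, ← Real.rpow_mul hb]
    norm_num
  have hsq : (u ^ (1 / p) * v ^ (1 / q)) ^ 2 ≤ ((1 / p) * u + (1 / q) * v) ^ 2 := by
    apply pow_le_pow_left₀ (by positivity) hAM
  have hu2 : u ^ 2 = a ^ p := by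
    rw [hu, ← Real.rpow_natCast (a ^ (p/2)) 2, ← Real.rpow_mul ha]
    norm_num
  have hv2 : v ^ 2 = b ^ q := by
    rw [hv, ← Real.rpow_natCast (b ^ (q/2)) 2, ← Real.rpow_mul hb]
    norm_num
  have key : ((1 / p) * u + (1 / q) * v) ^ 2
      = a ^ p / p + b ^ q / q - (1 / (p * q)) * (u - v) ^ 2 := by
    rw [← hu2, ← hv2]
    have hq' : 1 / q = 1 - 1 / p := by linarith
    rw [← one_div_mul_one_div, hq']
    have hinv : q⁻¹ = 1 - p⁻¹ := by rw [← one_div, ← one_div]; linarith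
    ring_nf
    rw [hinv]
    ring
  rw [hab]
  rw [← key] at *
  exact hsq
end
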